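/- Let F̃ be an elliptic Minkowski integrand. Let ν and n be unit vectors in ℝ^{n+1}, and let w be a unit vector such that w = a·ν − b·n for some real numbers a ≥ 0 and b ≥ 0. Then ⟨∇F̃(w), n⟩ ≤ ⟨∇F̃(ν), n⟩, with equality if and only if w = ν. -/

import Mathlib

open RealInnerProductSpace

noncomputable section

/-- Euclidean space ℝ^{n+1}. -/
abbrev Euc (n : ℕ) := EuclideanSpace ℝ (Fin (n + 1))

/-- A Minkowski integrand: `F 0 = 0`, smooth away from the origin,
positively 1-homogeneous, and positive on nonzero vectors. -/
def MinkowskiIntegrand (n : ℕ) (F : Euc n → ℝ) : Prop :=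
  F 0 = 0 ∧ ContDiffOn ℝ (⊤ : ℕ∞) F {0}ᶜ ∧
    (∀ s : ℝ, 0 < s → ∀ x : Euc n, F (s • x) = s * F x) ∧
    ∀ x : Euc n, x ≠ 0 → 0 < F x

/-- Ellipticity: the second Fréchet derivative at any unit vector is positive definite
on the orthogonal complement of that vector. -/
def Elliptic (n : ℕ) (F : Euc n → ℝ) : Prop :=
  ∀ x v : Euc n, ‖x‖ = 1 → v ≠ 0 → ⟪x, v⟫ = 0 →
    0 < iteratedFDeriv ℝ 2 F x ![v, v]

/-- The dual function `F^o(y) = sup {⟨y, ξ⟩ / F(ξ) : ‖ξ‖ = 1}`. -/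
def dualF (n : ℕ) (F : Euc n → ℝ) (y : Euc n) : ℝ :=
  sSup {r : ℝ | ∃ ξ : Euc n, ‖ξ‖ = 1 ∧ r = ⟪y, ξ⟫ / F ξ}

section Aux

variable {n : ℕ} {F : Euc n → ℝ}

lemma myContDiffAt (hF : MinkowskiIntegrand n F) {x : Euc n} (hx : x ≠ 0) :
    ContDiffAt ℝ 2 F x :=
  ((hF.2.1.contDiffAt ((isOpen_compl_singleton).mem_nhds (by simpa using hx)))).of_le (WithTop.coe_le_coe.mpr le_top)

lemma myDiffAt (hF : MinkowskiIntegrand n F) {x : Euc n} (hx : x ≠ 0) :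
    DifferentiableAt ℝ F x := (myContDiffAt hF hx).differentiableAt two_ne_zero

/-- 0-homogeneity of the derivative. -/
lemma fderiv_homog (hF : MinkowskiIntegrand n F) {x : Euc n} (hx : x ≠ 0)
    {s : ℝ} (hs : 0 < s) : fderiv ℝ F (s • x) = fderiv ℝ F x := by
  have hsx : s • x ≠ 0 := smul_ne_zero hs.ne' hx
  have h1 : HasFDerivAt (fun y : Euc n => F (s • y))
      ((fderiv ℝ F (s • x)).comp (s • ContinuousLinearMap.id ℝ (Euc n))) x := by
    have hc : HasFDerivAt (fun y : Euc n => s • y) (s • ContinuousLinearMap.id ℝ (Euc n)) x :=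
      (hasFDerivAt_id x).const_smul s
    exact ((myDiffAt hF hsx).hasFDerivAt).comp x hc
  have h2 : HasFDerivAt (fun y : Euc n => F (s • y)) (s • fderiv ℝ F x) x := by
    have : (fun y : Euc n => F (s • y)) = fun y : Euc n => s * F y := by
      funext y; exact hF.2.2.1 s hs y
    rw [this]
    exact ((myDiffAt hF hx).hasFDerivAt).const_mul s
  have h3 := h1.unique h2
  ext v
  have := congrArg (fun L : Euc n →L[ℝ] ℝ => L v) h3
  simp only [ContinuousLinearMap.comp_apply, ContinuousLinearMap.smul_apply,
    ContinuousLinearMap.coe_smul', Pi.smul_apply, ContinuousLinearMap.id_apply] at this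
  have h4 : fderiv ℝ F (s • x) (s • v) = s * fderiv ℝ F x v := by simpa using this
  rw [map_smul] at h4
  have := mul_left_cancel₀ hs.ne' (by simpa using h4)
  simpa using this

/-- Euler's relation. -/
lemma euler (hF : MinkowskiIntegrand n F) {x : Euc n} (hx : x ≠ 0) :
    fderiv ℝ F x x = F x := by
  have hγ : HasDerivAt (fun s : ℝ => s • x) x 1 := by
    simpa using (hasDerivAt_id (1:ℝ)).smul_const x
  have h1 : HasDerivAt (fun s : ℝ => F (s • x)) (fderiv ℝ F x x) 1 := by
    have hf : HasFDerivAt F (fderiv ℝ F x) ((1:ℝ) • x) := by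
      rw [one_smul]; exact (myDiffAt hF hx).hasFDerivAt
    exact hf.comp_hasDerivAt 1 hγ
  have h2 : HasDerivAt (fun s : ℝ => F (s • x)) (F x) 1 := by
    have h3 : HasDerivAt (fun s : ℝ => s * F x) (F x) 1 := by
      simpa using (hasDerivAt_id (1:ℝ)).mul_const (F x)
    apply h3.congr_of_eventuallyEq
    filter_upwards [eventually_gt_nhds zero_lt_one] with s hs
    exact hF.2.2.1 s hs x
  exact h1.unique h2

/-- Second derivative applied to the radial direction vanishes. -/
lemma snd_radial (hF : MinkowskiIntegrand n F) {x : Euc n} (hx : x ≠ 0) :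
    fderiv ℝ (fderiv ℝ F) x x = 0 := by
  have hd2 : DifferentiableAt ℝ (fderiv ℝ F) x := by
    have := (myContDiffAt hF hx).fderiv_right (m := 1) (by norm_num)
    exact this.differentiableAt one_ne_zero
  have hγ : HasDerivAt (fun s : ℝ => s • x) x 1 := by
    simpa using (hasDerivAt_id (1:ℝ)).smul_const x
  have h1 : HasDerivAt (fun s : ℝ => fderiv ℝ F (s • x)) (fderiv ℝ (fderiv ℝ F) x x) 1 := by
    have hf : HasFDerivAt (fderiv ℝ F) (fderiv ℝ (fderiv ℝ F) x) ((1:ℝ) • x) := by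
      rw [one_smul]; exact hd2.hasFDerivAt
    exact hf.comp_hasDerivAt 1 hγ
  have h2 : HasDerivAt (fun s : ℝ => fderiv ℝ F (s • x)) 0 1 := by
    have h3 : HasDerivAt (fun _ : ℝ => fderiv ℝ F x) 0 1 := hasDerivAt_const 1 _
    apply h3.congr_of_eventuallyEq
    filter_upwards [eventually_gt_nhds zero_lt_one] with s hs
    exact fderiv_homog hF hx hs
  exact h1.unique h2

/-- Symmetric version. -/
lemma snd_radial' (hF : MinkowskiIntegrand n F) {x : Euc n} (hx : x ≠ 0) (v : Euc n) :
    fderiv ℝ (fderiv ℝ F) x v x = 0 := by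
  have hsymm := (myContDiffAt hF hx).isSymmSndFDerivAt (by norm_num)
  rw [hsymm v x, snd_radial hF hx]
  rfl

lemma inner_comb (ν u : Euc n) (hν : ‖ν‖ = 1) (hu : ‖u‖ = 1) (hvu : ⟪ν, u⟫ = 0)
    (A B C D : ℝ) : ⟪A • ν + B • u, C • ν + D • u⟫ = A * C + B * D := by
  have h1 : ⟪ν,ν⟫ = 1 := by rw [real_inner_self_eq_norm_mul_norm, hν]; ring
  have h2 : ⟪u,u⟫ = 1 := by rw [real_inner_self_eq_norm_mul_norm, hu]; ring
  have h3 : ⟪u,ν⟫ = 0 := by rw [real_inner_comm]; exact hvu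
  simp only [inner_add_left, inner_add_right, real_inner_smul_left, real_inner_smul_right,
    h1, h2, h3, hvu]
  ring

lemma comb_norm_one (ν u : Euc n) (hν : ‖ν‖ = 1) (hu : ‖u‖ = 1) (hvu : ⟪ν, u⟫ = 0)
    (A B : ℝ) (hAB : A^2 + B^2 = 1) : ‖A • ν + B • u‖ = 1 := by
  have h := inner_comb ν u hν hu hvu A B A B
  rw [real_inner_self_eq_norm_mul_norm] at h
  have h2 : ‖A • ν + B • u‖ * ‖A • ν + B • u‖ = 1 := by rw [h]; nlinarith
  rcases mul_self_eq_one_iff.1 h2 with h3 | h3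
  · exact h3
  · nlinarith [norm_nonneg (A • ν + B • u)]

lemma grad_inner (x y : Euc n) : ⟪gradient F x, y⟫ = fderiv ℝ F x y := by
  simp [gradient, InnerProductSpace.toDual_symm_apply]

set_option maxHeartbeats 1000000 in
/-- Main lemma for the independent case: moving along the circle away from `nn`
strictly decreases the pairing with `nn`, provided we move at all. -/
lemma main_ind (hF : MinkowskiIntegrand n F) (hFell : Elliptic n F)
    (ν u nn w : Euc n) (hν : ‖ν‖ = 1) (hu : ‖u‖ = 1) (hvu : ⟪ν, u⟫ = 0)
    (c s a b A B : ℝ) (hs : 0 < s) (hcs : c ^ 2 + s ^ 2 = 1)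
    (hnn_eq : nn = c • ν - s • u)
    (ha : 0 ≤ a) (hb : 0 ≤ b) (hA : A = a - b * c) (hB : B = b * s)
    (hw_eq : w = A • ν + B • u) (hAB : A ^ 2 + B ^ 2 = 1) :
    w = ν ∨ (w ≠ ν ∧ fderiv ℝ F w nn < fderiv ℝ F ν nn) := by
  have hB0 : 0 ≤ B := by rw [hB]; positivity
  -- the angle θ
  set θ := Real.arccos A with hθdef
  have hθ0 : 0 ≤ θ := Real.arccos_nonneg A
  have hθπ : θ ≤ Real.pi := Real.arccos_le_pi A
  have hcosθ : Real.cos θ = A := Real.cos_arccos (by nlinarith) (by nlinarith)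
  have hsinθ : Real.sin θ = B := by
    rw [hθdef, Real.sin_arccos]
    have : 1 - A ^ 2 = B ^ 2 := by nlinarith
    rw [this, Real.sqrt_sq hB0]
  -- the curve
  set γ : ℝ → Euc n := fun t => Real.cos t • ν + Real.sin t • u with hγdef
  set γ' : ℝ → Euc n := fun t => (-Real.sin t) • ν + Real.cos t • u with hγ'def
  have pyth : ∀ t : ℝ, Real.sin t ^ 2 + Real.cos t ^ 2 = 1 := Real.sin_sq_add_cos_sq
  have hγ1 : ∀ t, ‖γ t‖ = 1 := fun t =>
    comb_norm_one ν u hν hu hvu _ _ (by nlinarith [pyth t])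
  have hγ'1 : ∀ t, ‖γ' t‖ = 1 := fun t =>
    comb_norm_one ν u hν hu hvu _ _ (by nlinarith [pyth t])
  have hγne : ∀ t, γ t ≠ 0 := fun t => fun h => by
    have := hγ1 t; rw [h] at this; simp at this
  have hγ'ne : ∀ t, γ' t ≠ 0 := fun t => fun h => by
    have := hγ'1 t; rw [h] at this; simp at this
  have hγorth : ∀ t, ⟪γ t, γ' t⟫ = 0 := fun t => by
    rw [hγdef, hγ'def]
    simp only []
    rw [inner_comb ν u hν hu hvu _ _ _ _]
    ring
  have hγw : γ θ = w := by rw [hγdef]; simp only []; rw [hcosθ, hsinθ, hw_eq]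
  have hγ0 : γ 0 = ν := by rw [hγdef]; simp
  -- second derivative positivity
  set Q : ℝ → ℝ := fun t => fderiv ℝ (fderiv ℝ F) (γ t) (γ' t) (γ' t) with hQdef
  have hQ : ∀ t, 0 < Q t := by
    intro t
    have h := hFell (γ t) (γ' t) (hγ1 t) (hγ'ne t) (hγorth t)
    rwa [iteratedFDeriv_two_apply, Matrix.cons_val_zero, Matrix.cons_val_one, Matrix.cons_val_zero]
      at h
  -- decomposition of nn in the moving frame
  have hdecomp : ∀ t : ℝ, nn =
      (c * Real.cos t - s * Real.sin t) • γ t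
        + (-(c * Real.sin t + s * Real.cos t)) • γ' t := by
    intro t
    rw [hnn_eq, hγdef, hγ'def]
    simp only []
    match_scalars
    · linear_combination (-c) * (pyth t)
    · linear_combination s * (pyth t)
  -- the function g and its derivative
  set g : ℝ → ℝ := fun t => fderiv ℝ F (γ t) nn with hgdef
  have hg : ∀ t, HasDerivAt g ((-(c * Real.sin t + s * Real.cos t)) * Q t) t := by
    intro t
    have hγd : HasDerivAt γ (γ' t) t := by
      rw [hγdef, hγ'def]
      exact ((Real.hasDerivAt_cos t).smul_const ν).add ((Real.hasDerivAt_sin t).smul_const u)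
    have hd2 : DifferentiableAt ℝ (fderiv ℝ F) (γ t) := by
      have := (myContDiffAt hF (hγne t)).fderiv_right (m := 1) (by norm_num)
      exact this.differentiableAt one_ne_zero
    have h1 : HasDerivAt (fun t => fderiv ℝ F (γ t))
        (fderiv ℝ (fderiv ℝ F) (γ t) (γ' t)) t := hd2.hasFDerivAt.comp_hasDerivAt t hγd
    have h2 := (ContinuousLinearMap.apply ℝ ℝ nn).hasFDerivAt.comp_hasDerivAt t h1
    have h3 : HasDerivAt g (fderiv ℝ (fderiv ℝ F) (γ t) (γ' t) nn) t := h2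
    have h4 : fderiv ℝ (fderiv ℝ F) (γ t) (γ' t) nn
        = (-(c * Real.sin t + s * Real.cos t)) * Q t := by
      conv_lhs => rw [hdecomp t]
      rw [map_add, map_smul, map_smul]
      have h5 : fderiv ℝ (fderiv ℝ F) (γ t) (γ' t) (γ t) = 0 := snd_radial' hF (hγne t) (γ' t)
      rw [hQdef]
      simp only [smul_eq_mul, h5, mul_zero, zero_add]
    rwa [h4] at h3
  -- case split on θ
  rcases eq_or_lt_of_le hθ0 with hθ | hθpos
  · left
    rw [← hγw, ← hθ, hγ0]
  · right
    -- the auxiliary angle φ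
    have hc1 : c < 1 := by nlinarith
    have hc2 : -1 < c := by nlinarith
    set φ := Real.arccos c with hφdef
    have hφpos : 0 < φ := Real.arccos_pos.mpr hc1
    have hφπ : φ < Real.pi := by
      rw [hφdef, Real.arccos]
      have := Real.neg_pi_div_two_lt_arcsin.mpr hc2
      linarith [Real.pi_pos]
    have hcosφ : Real.cos φ = c := Real.cos_arccos hc2.le hc1.le
    have hsinφ : Real.sin φ = s := by
      rw [hφdef, Real.sin_arccos]
      have : 1 - c ^ 2 = s ^ 2 := by nlinarith
      rw [this, Real.sqrt_sq hs.le]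
    have key : ∀ t : ℝ, c * Real.sin t + s * Real.cos t = Real.sin (t + φ) := by
      intro t; rw [Real.sin_add, hcosφ, hsinφ]; ring
    have hsa : Real.sin (θ + φ) = s * a := by
      rw [← key θ, hsinθ, hcosθ, hA, hB]; ring
    have hθφ : θ + φ ≤ Real.pi := by
      by_contra h
      push_neg at h
      have h1 : 0 < Real.sin (θ + φ - Real.pi) :=
        Real.sin_pos_of_pos_of_lt_pi (by linarith) (by linarith)
      rw [Real.sin_sub_pi] at h1
      have h2 : 0 ≤ Real.sin (θ + φ) := by rw [hsa]; positivity
      linarith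
    have hanti : StrictAntiOn g (Set.Icc 0 θ) := by
      apply strictAntiOn_of_deriv_neg (convex_Icc 0 θ)
      · exact Continuous.continuousOn (by
          apply continuous_iff_continuousAt.mpr
          exact fun t => (hg t).differentiableAt.continuousAt)
      · intro t ht
        rw [interior_Icc] at ht
        rw [(hg t).deriv]
        have h1 : 0 < Real.sin (t + φ) :=
          Real.sin_pos_of_pos_of_lt_pi (by linarith [ht.1]) (by linarith [ht.2])
        rw [← key t] at h1
        have := hQ t
        nlinarith
    have hlt : g θ < g 0 :=
      hanti (Set.mem_Icc.mpr ⟨le_rfl, hθpos.le⟩) (Set.mem_Icc.mpr ⟨hθ0, le_rfl⟩) hθpos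
    have hgθ : g θ = fderiv ℝ F w nn := by rw [hgdef]; simp only []; rw [hγw]
    have hg0 : g 0 = fderiv ℝ F ν nn := by rw [hgdef]; simp only []; rw [hγ0]
    rw [hgθ, hg0] at hlt
    refine ⟨?_, hlt⟩
    intro hwv
    rw [hwv] at hlt
    exact lt_irrefl _ hlt

end Aux

set_option maxHeartbeats 1000000 in
theorem statement_13 {n : ℕ} (hn : 1 ≤ n) (F : Euc n → ℝ)
    (hF : MinkowskiIntegrand n F) (hFell : Elliptic n F)
    (ν nn w : Euc n) (hν : ‖ν‖ = 1) (hnn : ‖nn‖ = 1) (hw : ‖w‖ = 1)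
    (hwab : ∃ a b : ℝ, 0 ≤ a ∧ 0 ≤ b ∧ w = a • ν - b • nn) :
    ⟪gradient F w, nn⟫ ≤ ⟪gradient F ν, nn⟫ ∧
      (⟪gradient F w, nn⟫ = ⟪gradient F ν, nn⟫ ↔ w = ν) := by
  obtain ⟨a, b, ha, hb, hwab⟩ := hwab
  have hν0 : ν ≠ 0 := fun h => by rw [h] at hν; simp at hν
  set c : ℝ := ⟪nn, ν⟫ with hcdef
  have hinncomm : ⟪ν, nn⟫ = c := by rw [hcdef, real_inner_comm]
  have hνν : ⟪ν, ν⟫ = 1 := by rw [real_inner_self_eq_norm_mul_norm, hν]; ring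
  have hnnnn : ⟪nn, nn⟫ = 1 := by rw [real_inner_self_eq_norm_mul_norm, hnn]; ring
  by_cases hzz : nn - c • ν = 0
  · -- degenerate case : nn = ± ν
    have hnnc : nn = c • ν := by rwa [sub_eq_zero] at hzz
    have habs : |c| = 1 := by
      have h := congrArg norm hnnc
      rw [norm_smul, hν, hnn] at h
      simpa using h.symm
    rcases (abs_eq (by norm_num : (0:ℝ) ≤ 1)).mp habs with hc | hc
    · -- nn = ν
      have hnnν : nn = ν := by rw [hnnc, hc, one_smul]
      have hwv : w = (a - b) • ν := by rw [hwab, hnnν, sub_smul]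
      have hab : |a - b| = 1 := by
        have h := congrArg norm hwv
        rw [norm_smul, hν, hw] at h
        simpa using h.symm
      rcases (abs_eq (by norm_num : (0:ℝ) ≤ 1)).mp hab with h1 | h1
      · have hwvv : w = ν := by rw [hwv, h1, one_smul]
        rw [hwvv]
        exact ⟨le_rfl, by simp⟩
      · have hwneg : w = -ν := by rw [hwv, h1, neg_one_smul]
        have hFν : 0 < F ν := hF.2.2.2 ν hν0
        have hFnν : 0 < F (-ν) := hF.2.2.2 _ (neg_ne_zero.mpr hν0)
        have e1 : fderiv ℝ F ν ν = F ν := euler hF hν0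
        have e2 : fderiv ℝ F (-ν) (-ν) = F (-ν) := euler hF (neg_ne_zero.mpr hν0)
        have e3 : fderiv ℝ F (-ν) ν = -F (-ν) := by
          rw [map_neg] at e2; linarith
        have hlt : ⟪gradient F w, nn⟫ < ⟪gradient F ν, nn⟫ := by
          rw [grad_inner, grad_inner, hwneg, hnnν, e1, e3]; linarith
        have hne : w ≠ ν := by
          rw [hwneg]
          intro h
          apply hν0
          have h2 : ν + ν = 0 := by nth_rewrite 1 [← h]; simp
          have h3 : (2:ℝ) • ν = 0 := by rw [two_smul]; exact h2
          simpa using smul_eq_zero.mp h3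
        exact ⟨hlt.le, ⟨fun h => absurd h hlt.ne, fun h => absurd h hne⟩⟩
    · -- nn = -ν
      have hnnν : nn = -ν := by rw [hnnc, hc, neg_one_smul]
      have hwv : w = (a + b) • ν := by rw [hwab, hnnν]; module
      have hab : |a + b| = 1 := by
        have h := congrArg norm hwv
        rw [norm_smul, hν, hw] at h
        simpa using h.symm
      have hab1 : a + b = 1 := by
        rcases (abs_eq (by norm_num : (0:ℝ) ≤ 1)).mp hab with h1 | h1
        · exact h1
        · linarith
      have hwvv : w = ν := by rw [hwv, hab1, one_smul]
      rw [hwvv]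
      exact ⟨le_rfl, by simp⟩
  · -- independent case
    set z := nn - c • ν with hzdef
    have hs : 0 < ‖z‖ := norm_pos_iff.mpr hzz
    set s : ℝ := ‖z‖ with hsdef
    set u : Euc n := (-(s⁻¹)) • z with hudef
    have hu1 : ‖u‖ = 1 := by
      rw [hudef, norm_smul, ← hsdef]
      rw [norm_neg, norm_inv, Real.norm_eq_abs, abs_of_pos hs]
      field_simp
    have hinner_vz : ⟪ν, z⟫ = 0 := by
      rw [hzdef, inner_sub_right, real_inner_smul_right, hνν, hinncomm]; ring
    have hvu : ⟪ν, u⟫ = 0 := by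
      rw [hudef, real_inner_smul_right, hinner_vz, mul_zero]
    have hnn_eq : nn = c • ν - s • u := by
      rw [hudef, smul_smul]
      rw [show s * -s⁻¹ = -1 by field_simp]
      rw [hzdef]
      module
    have hcs : c ^ 2 + s ^ 2 = 1 := by
      have hzz2 : ⟪z, z⟫ = 1 - c ^ 2 := by
        rw [hzdef]
        simp only [inner_sub_left, inner_sub_right, real_inner_smul_left,
          real_inner_smul_right, hνν, hnnnn, hinncomm, ← hcdef]
        ring
      have hs2 : s ^ 2 = ⟪z, z⟫ := by
        rw [real_inner_self_eq_norm_mul_norm, ← hsdef]; ring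
      rw [hs2, hzz2]; ring
    have hw_eq : w = (a - b * c) • ν + (b * s) • u := by
      rw [hwab, hnn_eq]; module
    have hAB : (a - b * c) ^ 2 + (b * s) ^ 2 = 1 := by
      have h := inner_comb ν u hν hu1 hvu (a - b * c) (b * s) (a - b * c) (b * s)
      rw [← hw_eq, real_inner_self_eq_norm_mul_norm, hw] at h
      nlinarith
    rcases main_ind hF hFell ν u nn w hν hu1 hvu c s a b (a - b * c) (b * s)
        hs hcs hnn_eq ha hb rfl rfl hw_eq hAB with h | ⟨hne, hlt⟩
    · rw [h]
      exact ⟨le_rfl, by simp⟩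
    · rw [grad_inner, grad_inner]
      exact ⟨hlt.le, ⟨fun h => absurd h hlt.ne, fun h => absurd h hne⟩⟩
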